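/- arXiv:2002.10910 — 7 statements merged into one kernel-verified Lean document; each statement's English description precedes it below -/
import Mathlib

section
/- (Necessity direction of Afriat's Theorem, statement 1 ⟹ statement 4.) Let D = {(α_t, β_t) : t = 1,...,N} be a dataset with α_t ∈ ℝ^m strictly positive componentwise and β_t ∈ ℝ^m nonnegative componentwise. Suppose there exists a continuous utility function U : ℝ^m_{≥0} → ℝ that is monotone increasing (x ≤ y componentwise implies U(x) ≤ U(y), strict if x < y strictly componentwise) such that for every t, β_t ∈ argmax{U(β) : β ∈ ℝ^m_{≥0}, α_t'β ≤ α_t'β_t}. Then the dataset satisfies GARP: for every finite sequence of indices t_1, ..., t_L with α_{t_i}'β_{t_{i+1}} ≤ α_{t_i}'β_{t_i} for all i = 1, ..., L−1, it holds that α_{t_L}'β_{t_1} ≥ α_{t_L}'β_{t_L} whenever additionally α_{t_L}'β_{t_1} ≤ α_{t_L}'β_{t_L}; i.e., the two inner products are then equal. -/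
/-
Revealed preference along a chain can only lower utility: each `β_{t_{i+1}}` was affordable
when `β_{t_i}` was chosen, so `U β_{t_{L-1}} ≤ U β_{t_0}`. On the other hand strict monotonicity
makes a maximizer locally nonsatiated: if `β_{t_0}` were strictly cheaper than `β_{t_{L-1}}`
at prices `α_{t_{L-1}}`, raising every coordinate of `β_{t_0}` by a small `ε > 0` would keep it
affordable and strictly improve it, giving `U β_{t_0} < U β_{t_{L-1}}`, a contradiction.
-/

open Finset

/-- Euclidean inner product on `Fin m → ℝ`. -/
def dotp {m : ℕ} (x y : Fin m → ℝ) : ℝ := ∑ i, x i * y i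

theorem apply_le_apply_zero_of_succ_le {α : Type*} [Preorder α] {f : ℕ → α} {L : ℕ}
    (hf : ∀ i, i + 1 < L → f (i + 1) ≤ f i) : ∀ i, i < L → f i ≤ f 0
  | 0, _ => le_rfl
  | i + 1, hi => (hf i hi).trans (apply_le_apply_zero_of_succ_le hf i (by omega))

theorem dotp_add_const {m : ℕ} (p b : Fin m → ℝ) (c : ℝ) :
    dotp p (fun i => b i + c) = dotp p b + c * ∑ i, p i := by
  simp only [dotp, mul_add, sum_add_distrib, ← sum_mul, mul_comm c]

theorem utility_lt_of_dotp_lt {m : ℕ} {p x b : Fin m → ℝ} {U : (Fin m → ℝ) → ℝ}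
    (hp : ∀ i, 0 < p i)
    (hUstrict : ∀ x y : Fin m → ℝ, (∀ i, 0 ≤ x i) → (∀ i, 0 ≤ y i) →
      (∀ i, x i < y i) → U x < U y)
    (hmax : ∀ b : Fin m → ℝ, (∀ i, 0 ≤ b i) → dotp p b ≤ dotp p x → U b ≤ U x)
    (hb : ∀ i, 0 ≤ b i) (hlt : dotp p b < dotp p x) : U b < U x := by
  set S := ∑ i, p i
  have hS : 0 ≤ S := sum_nonneg fun i _ => (hp i).le
  -- dividing by `S + 1` rather than `S` avoids a case split on `m = 0`
  set ε := (dotp p x - dotp p b) / (S + 1)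
  have hε : 0 < ε := div_pos (by linarith) (by linarith)
  have hεS : ε * S ≤ dotp p x - dotp p b :=
    calc ε * S ≤ ε * (S + 1) := by linarith
      _ = dotp p x - dotp p b := div_mul_cancel₀ _ (by linarith)
  have hbε : ∀ i, 0 ≤ b i + ε := fun i => by linarith [hb i]
  calc U b < U (fun i => b i + ε) := hUstrict _ _ hb hbε fun i => by linarith
    _ ≤ U x := hmax _ hbε (by rw [dotp_add_const]; linarith)

theorem afriat_necessity_general {m N : ℕ}
    (α βv : Fin N → Fin m → ℝ)
    (hα : ∀ t i, 0 < α t i) (hβ : ∀ t i, 0 ≤ βv t i)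
    (U : (Fin m → ℝ) → ℝ)
    (hUstrict : ∀ x y : Fin m → ℝ, (∀ i, 0 ≤ x i) → (∀ i, 0 ≤ y i) →
      (∀ i, x i < y i) → U x < U y)
    (hrat : ∀ t, ∀ b : Fin m → ℝ, (∀ i, 0 ≤ b i) →
      dotp (α t) b ≤ dotp (α t) (βv t) → U b ≤ U (βv t)) :
    ∀ L : ℕ, 0 < L → ∀ t : ℕ → Fin N,
      (∀ i, i + 1 < L →
        dotp (α (t i)) (βv (t (i+1))) ≤ dotp (α (t i)) (βv (t i))) →
      dotp (α (t (L-1))) (βv (t 0)) ≤ dotp (α (t (L-1))) (βv (t (L-1))) →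
      dotp (α (t (L-1))) (βv (t 0)) = dotp (α (t (L-1))) (βv (t (L-1))) := by
  intro L hL t hchain hle
  have hU : U (βv (t (L - 1))) ≤ U (βv (t 0)) :=
    apply_le_apply_zero_of_succ_le (f := fun i => U (βv (t i)))
      (fun i hi => hrat (t i) _ (hβ _) (hchain i hi)) (L - 1) (by omega)
  refine hle.eq_of_not_lt fun hlt => ?_
  exact (utility_lt_of_dotp_lt (hα _) hUstrict (hrat _) (hβ _) hlt).not_ge hU

/-- **Necessity direction of Afriat's Theorem (1 ⟹ 4).**  If a dataset with strictly
positive probes `α t` and nonnegative responses `β t` is rationalized by a continuous,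
monotone increasing utility `U` on the nonnegative orthant, then the dataset satisfies
GARP: along any revealed-preference chain `t 0, …, t (L-1)`, if additionally
`α_{t_{L-1}}'β_{t_0} ≤ α_{t_{L-1}}'β_{t_{L-1}}` then the two inner products are equal. -/
theorem afriat_necessity {m N : ℕ}
    (α βv : Fin N → Fin m → ℝ)
    (hα : ∀ t i, 0 < α t i) (hβ : ∀ t i, 0 ≤ βv t i)
    (U : (Fin m → ℝ) → ℝ)
    (hUcont : ContinuousOn U {b | ∀ i, 0 ≤ b i})
    (hUmono : ∀ x y : Fin m → ℝ, (∀ i, 0 ≤ x i) → (∀ i, 0 ≤ y i) →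
      (∀ i, x i ≤ y i) → U x ≤ U y)
    (hUstrict : ∀ x y : Fin m → ℝ, (∀ i, 0 ≤ x i) → (∀ i, 0 ≤ y i) →
      (∀ i, x i < y i) → U x < U y)
    (hrat : ∀ t, ∀ b : Fin m → ℝ, (∀ i, 0 ≤ b i) →
      dotp (α t) b ≤ dotp (α t) (βv t) → U b ≤ U (βv t)) :
    ∀ L : ℕ, 0 < L → ∀ t : ℕ → Fin N,
      (∀ i, i + 1 < L →
        dotp (α (t i)) (βv (t (i+1))) ≤ dotp (α (t i)) (βv (t i))) →
      dotp (α (t (L-1))) (βv (t 0)) ≤ dotp (α (t (L-1))) (βv (t (L-1))) →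
      dotp (α (t (L-1))) (βv (t 0)) = dotp (α (t (L-1))) (βv (t (L-1))) :=
  afriat_necessity_general α βv hα hβ U hUstrict hrat
end

section
/- (Constructive direction of Afriat's Theorem, statement 2 ⟹ statement 1: the Afriat utility rationalizes the data.) Let D = {(α_t, β_t) : t = 1,...,N} be a dataset with α_t ∈ ℝ^m strictly positive componentwise and β_t ∈ ℝ^m nonnegative componentwise, and suppose there exist reals u_t and λ_t > 0 satisfying the Afriat inequalities u_s − u_t − λ_t α_t'(β_s − β_t) ≤ 0 for all t, s. Define U(β) = min_{t ∈ {1,...,N}} { u_t + λ_t α_t'(β − β_t) } for β ∈ ℝ^m_{≥0}. Then (i) U(β_s) = u_s for every s ∈ {1,...,N}, and (ii) for every n ∈ {1,...,N} and every β ∈ ℝ^m_{≥0} with α_n'β ≤ α_n'β_n, one has U(β) ≤ U(β_n); that is, β_n maximizes U over the budget set {β ∈ ℝ^m_{≥0} : α_n'β ≤ α_n'β_n}. -/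
/-!
The Afriat utility is a minimum of affine functions, the `t`-th of which takes the value `u t`
at `β t`. At `β s` the `s`-th piece equals `u s` and the Afriat inequalities say that no other
piece is smaller, so `U (β s) = u s`. On the budget set of `n` the `n`-th piece is at most
`u n`, since its slope `λ n α n` points out of that set; hence so is the minimum `U`.
-/

open Finset

/-- The piecewise-linear Afriat utility
`U(β) = min_t { u t + λ t ⟨α t, β − β t⟩ }` built from a feasible solution of the
Afriat inequalities. -/
noncomputable def afriatU {m N : ℕ} [Nonempty (Fin N)]
    (α βv : Fin N → Fin m → ℝ) (u lam : Fin N → ℝ) (b : Fin m → ℝ) : ℝ :=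
  Finset.univ.inf' Finset.univ_nonempty
    (fun t => u t + lam t * dotp (α t) (fun i => b i - βv t i))

theorem dotp_sub_right {m : ℕ} (x y z : Fin m → ℝ) :
    dotp x (fun i => y i - z i) = dotp x y - dotp x z := by
  simp only [dotp, mul_sub, sum_sub_distrib]

section afriatU

variable {m N : ℕ} [Nonempty (Fin N)] (α βv : Fin N → Fin m → ℝ) (u lam : Fin N → ℝ)

theorem afriatU_le (b : Fin m → ℝ) (t : Fin N) :
    afriatU α βv u lam b ≤ u t + lam t * dotp (α t) (fun i => b i - βv t i) :=
  inf'_le _ (mem_univ t)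

theorem le_afriatU {b : Fin m → ℝ} {c : ℝ}
    (h : ∀ t, c ≤ u t + lam t * dotp (α t) (fun i => b i - βv t i)) :
    c ≤ afriatU α βv u lam b :=
  le_inf' _ _ fun t _ => h t

theorem afriatU_le_of_dotp_le {n : Fin N} (hlam : 0 ≤ lam n) {b : Fin m → ℝ}
    (hb : dotp (α n) b ≤ dotp (α n) (βv n)) :
    afriatU α βv u lam b ≤ u n := by
  have hslope : lam n * dotp (α n) (fun i => b i - βv n i) ≤ 0 := by
    rw [dotp_sub_right]
    exact mul_nonpos_of_nonneg_of_nonpos hlam (sub_nonpos.mpr hb)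
  linarith [afriatU_le α βv u lam b n]

theorem afriatU_apply_eq
    (hAfriat : ∀ t s, u s - u t - lam t * dotp (α t) (fun i => βv s i - βv t i) ≤ 0)
    (s : Fin N) : afriatU α βv u lam (βv s) = u s := by
  refine le_antisymm ?_ ?_
  · refine (afriatU_le α βv u lam (βv s) s).trans_eq ?_
    rw [dotp_sub_right, sub_self, mul_zero, add_zero]
  · exact le_afriatU α βv u lam fun t => by linarith [hAfriat t s]

end afriatU

theorem afriat_constructive_general {m N : ℕ} [Nonempty (Fin N)]
    (α βv : Fin N → Fin m → ℝ)
    (u lam : Fin N → ℝ) (hlam : ∀ t, 0 < lam t)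
    (hAfriat : ∀ t s, u s - u t - lam t * dotp (α t) (fun i => βv s i - βv t i) ≤ 0) :
    (∀ s, afriatU α βv u lam (βv s) = u s) ∧
    (∀ n, ∀ b : Fin m → ℝ, (∀ i, 0 ≤ b i) →
      dotp (α n) b ≤ dotp (α n) (βv n) →
      afriatU α βv u lam b ≤ afriatU α βv u lam (βv n)) := by
  refine ⟨afriatU_apply_eq α βv u lam hAfriat, fun n b _ hb => ?_⟩
  rw [afriatU_apply_eq α βv u lam hAfriat n]
  exact afriatU_le_of_dotp_le α βv u lam (hlam n).le hb

/-- **Constructive direction of Afriat's Theorem (2 ⟹ 1).**  If reals `u t` and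
`λ t > 0` satisfy the Afriat inequalities for the dataset `{(α t, β t)}` (probes
strictly positive, responses nonnegative), then the Afriat utility
`U(β) = min_t { u t + λ t ⟨α t, β − β t⟩ }` satisfies (i) `U (β s) = u s` for all `s`,
and (ii) for every `n`, `β n` maximizes `U` over the budget set
`{β ≥ 0 : ⟨α n, β⟩ ≤ ⟨α n, β n⟩}`. -/
theorem afriat_constructive {m N : ℕ} [Nonempty (Fin N)]
    (α βv : Fin N → Fin m → ℝ)
    (hα : ∀ t i, 0 < α t i) (hβ : ∀ t i, 0 ≤ βv t i)
    (u lam : Fin N → ℝ) (hlam : ∀ t, 0 < lam t)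
    (hAfriat : ∀ t s, u s - u t - lam t * dotp (α t) (fun i => βv s i - βv t i) ≤ 0) :
    (∀ s, afriatU α βv u lam (βv s) = u s) ∧
    (∀ n, ∀ b : Fin m → ℝ, (∀ i, 0 ≤ b i) →
      dotp (α n) b ≤ dotp (α n) (βv n) →
      afriatU α βv u lam b ≤ afriatU α βv u lam (βv n)) :=
  afriat_constructive_general α βv u lam hlam hAfriat
end

section
/- (The Kalman measurement update contracts the covariance.) Let S ∈ ℝ^{X×X} be symmetric positive semidefinite, R ∈ ℝ^{Y×Y} symmetric positive definite, and C ∈ ℝ^{Y×X}. Then the updated covariance S − S Cᵀ (C S Cᵀ + R)^{-1} C S is symmetric positive semidefinite and satisfies S − S Cᵀ (C S Cᵀ + R)^{-1} C S ⪯ S in the Loewner order. Consequently, for any A ∈ ℝ^{X×X} and symmetric positive semidefinite Q, any symmetric positive semidefinite solution Σ of the algebraic Riccati equation Σ = A (Σ − Σ Cᵀ (C Σ Cᵀ + R)^{-1} C Σ) Aᵀ + Q satisfies Σ ⪰ Q. -/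
/-!
The updated covariance is the Schur complement of the `C S Cᴴ + R` block in the joint
covariance `[[C S Cᴴ + R, C S], [S Cᴴ, S]]` of the observation `C x + v` and the state `x`.
That joint covariance is the congruence of `diag(R, S)` by `[[1, C], [0, 1]]`, hence positive
semidefinite, and a Schur complement with positive definite pivot inherits positive
semidefiniteness. The correction `S Cᴴ (C S Cᴴ + R)⁻¹ C S = (C S)ᴴ (C S Cᴴ + R)⁻¹ (C S)` is
positive semidefinite as well, which gives the Loewner bound; for a Riccati solution `Σ − Q` is
the congruence of an updated covariance by `A`.
-/

open Matrix

variable {K m n : Type*} [Fintype m] [Fintype n]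

theorem Matrix.fromBlocks_one_mul_fromBlocks_zero_mul_conjTranspose {α : Type*} [Ring α]
    [StarRing α] [DecidableEq m] [DecidableEq n] {S : Matrix n n α} (hS : S.IsHermitian)
    (R : Matrix m m α) (C : Matrix m n α) :
    fromBlocks 1 C 0 1 * fromBlocks R 0 0 S * (fromBlocks 1 C 0 1)ᴴ
      = fromBlocks (C * S * Cᴴ + R) (C * S) (C * S)ᴴ S := by
  simp [fromBlocks_multiply, fromBlocks_conjTranspose, hS.eq, Matrix.mul_assoc, add_comm]

variable [Field K] [PartialOrder K] [StarRing K] [StarOrderedRing K]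

theorem Matrix.PosSemidef.mul_mul_conjTranspose_add_posDef {S : Matrix n n K}
    {R : Matrix m m K} (hS : S.PosSemidef) (hR : R.PosDef) (C : Matrix m n K) :
    (C * S * Cᴴ + R).PosDef :=
  PosDef.posSemidef_add (hS.mul_mul_conjTranspose_same C) hR

variable [DecidableEq m]

theorem Matrix.PosDef.fromBlocks_zero_zero {A : Matrix m m K} {D : Matrix n n K}
    (hA : A.PosDef) (hD : D.PosSemidef) : (fromBlocks A 0 0 D).PosSemidef := by
  have := hA.isUnit.invertible
  simpa using (PosDef.fromBlocks₁₁ (0 : Matrix m n K) D hA).2 (by simpa using hD)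

noncomputable def kalmanUpdate (S : Matrix n n K) (C : Matrix m n K) (R : Matrix m m K) :
    Matrix n n K :=
  S - S * Cᴴ * (C * S * Cᴴ + R)⁻¹ * C * S

theorem posSemidef_kalmanUpdate [DecidableEq n] {S : Matrix n n K} {R : Matrix m m K}
    (hS : S.PosSemidef) (hR : R.PosDef) (C : Matrix m n K) : (kalmanUpdate S C R).PosSemidef := by
  have hM := hS.mul_mul_conjTranspose_add_posDef hR C
  have := hM.isUnit.invertible
  have hjoint : (fromBlocks (C * S * Cᴴ + R) (C * S) (C * S)ᴴ S).PosSemidef := by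
    rw [← fromBlocks_one_mul_fromBlocks_zero_mul_conjTranspose hS.isHermitian]
    exact (hR.fromBlocks_zero_zero hS).mul_mul_conjTranspose_same _
  simpa [kalmanUpdate, hS.isHermitian.eq, Matrix.mul_assoc] using
    (PosDef.fromBlocks₁₁ (C * S) S hM).1 hjoint

theorem posSemidef_sub_kalmanUpdate {S : Matrix n n K} {R : Matrix m m K} (hS : S.PosSemidef)
    (hR : R.PosDef) (C : Matrix m n K) : (S - kalmanUpdate S C R).PosSemidef := by
  have h := (hS.mul_mul_conjTranspose_add_posDef hR C).inv.posSemidef.conjTranspose_mul_mul_same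
    (C * S)
  simpa [kalmanUpdate, hS.isHermitian.eq, Matrix.mul_assoc] using h

theorem posSemidef_sub_of_eq_riccati [DecidableEq n] {A Q Sig : Matrix n n K}
    {C : Matrix m n K} {R : Matrix m m K} (hSig : Sig.PosSemidef) (hR : R.PosDef)
    (hric : Sig = A * kalmanUpdate Sig C R * Aᴴ + Q) : (Sig - Q).PosSemidef := by
  rw [sub_eq_of_eq_add hric]
  exact (posSemidef_kalmanUpdate hSig hR C).mul_mul_conjTranspose_same A

/-- **The Kalman measurement update contracts the covariance.**  For symmetric
positive semidefinite `S`, positive definite `R` and any `C`, the updated covariance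
`S − S Cᵀ (C S Cᵀ + R)⁻¹ C S` is positive semidefinite and dominated by `S` in the
Loewner order.  Consequently any positive semidefinite solution `Σ` of the algebraic
Riccati equation `Σ = A (Σ − Σ Cᵀ (C Σ Cᵀ + R)⁻¹ C Σ) Aᵀ + Q` (with `Q`
positive semidefinite) satisfies `Σ ⪰ Q`. -/
theorem kalman_update_contracts {X Y : ℕ}
    (S : Matrix (Fin X) (Fin X) ℝ) (R : Matrix (Fin Y) (Fin Y) ℝ)
    (C : Matrix (Fin Y) (Fin X) ℝ)
    (hS : S.PosSemidef) (hR : R.PosDef) :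
    (S - S * Cᵀ * (C * S * Cᵀ + R)⁻¹ * C * S).PosSemidef ∧
    (S - (S - S * Cᵀ * (C * S * Cᵀ + R)⁻¹ * C * S)).PosSemidef ∧
    (∀ A Q Sig : Matrix (Fin X) (Fin X) ℝ, Q.PosSemidef → Sig.PosSemidef →
      Sig = A * (Sig - Sig * Cᵀ * (C * Sig * Cᵀ + R)⁻¹ * C * Sig) * Aᵀ + Q →
      (Sig - Q).PosSemidef) := by
  simp only [← conjTranspose_eq_transpose_of_trivial]
  exact ⟨posSemidef_kalmanUpdate hS hR C, posSemidef_sub_kalmanUpdate hS hR C,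
    fun _ _ _ _ hSig hric => posSemidef_sub_of_eq_riccati hSig hR hric⟩
end

section
/- (Monotonicity of the Riccati/Kalman update in the prior covariance.) Let R ∈ ℝ^{Y×Y} be symmetric positive definite, C ∈ ℝ^{Y×X}, A ∈ ℝ^{X×X}, and let Q ∈ ℝ^{X×X} be symmetric positive semidefinite. Define the Riccati map 𝓡(S) = A (S − S Cᵀ (C S Cᵀ + R)^{-1} C S) Aᵀ + Q on symmetric positive definite matrices S. If S₁ and S₂ are symmetric positive definite with S₁ ⪯ S₂ in the Loewner order, then 𝓡(S₁) ⪯ 𝓡(S₂). -/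
/-!
The measurement update `S - S Cᴴ (C S Cᴴ + V)⁻¹ C S` is the Schur complement of the top-left
block of `[[C S Cᴴ + V, C S], [S Cᴴ, S]] = F S Fᴴ + diag(V, 0)`, where `F = [C; 1]`, and this
block matrix is monotone in `S`. A Schur complement `D - Bᴴ A⁻¹ B` is the largest `X` with
`[[A, B], [Bᴴ, D - X]] ⪰ 0`, so it is monotone in the block matrix. Conjugating by `A` and
adding `Q` preserve the Loewner order.
-/

open Matrix

noncomputable def riccatiMap {X Y : ℕ}
    (A : Matrix (Fin X) (Fin X) ℝ) (C : Matrix (Fin Y) (Fin X) ℝ)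
    (R : Matrix (Fin Y) (Fin Y) ℝ) (Q : Matrix (Fin X) (Fin X) ℝ)
    (S : Matrix (Fin X) (Fin X) ℝ) : Matrix (Fin X) (Fin X) ℝ :=
  A * (S - S * Cᵀ * (C * S * Cᵀ + R)⁻¹ * C * S) * Aᵀ + Q

namespace Matrix

variable {m n R : Type*} [Fintype m] [Fintype n] [DecidableEq m]
  [Field R] [PartialOrder R] [StarRing R] [StarOrderedRing R]

theorem posSemidef_schur_complement_sub_of_fromBlocks₁₁
    {A₁ A₂ : Matrix m m R} (B₁ B₂ : Matrix m n R) (D₁ D₂ : Matrix n n R)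
    (hA₁ : A₁.PosDef) (hA₂ : A₂.PosDef)
    (h : (fromBlocks A₂ B₂ B₂ᴴ D₂ - fromBlocks A₁ B₁ B₁ᴴ D₁).PosSemidef) :
    ((D₂ - B₂ᴴ * A₂⁻¹ * B₂) - (D₁ - B₁ᴴ * A₁⁻¹ * B₁)).PosSemidef := by
  let _ : Invertible A₁ := hA₁.isUnit.invertible
  let _ : Invertible A₂ := hA₂.isUnit.invertible
  set X := D₁ - B₁ᴴ * A₁⁻¹ * B₁
  have h₁ : (fromBlocks A₁ B₁ B₁ᴴ (D₁ - X)).PosSemidef :=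
    (PosDef.fromBlocks₁₁ B₁ _ hA₁).mpr (by simpa [X] using PosSemidef.zero)
  have h₂ : (fromBlocks A₂ B₂ B₂ᴴ (D₂ - X)).PosSemidef := by
    convert h.add h₁ using 1
    ext (_ | _) (_ | _) <;> simp
  simpa [sub_right_comm] using (PosDef.fromBlocks₁₁ B₂ _ hA₂).mp h₂

end Matrix

section MeasurementUpdate

variable {m n R : Type*} [Fintype m] [Fintype n] [DecidableEq m] [Field R] [StarRing R]

noncomputable def measurementUpdate (C : Matrix m n R) (V : Matrix m m R) (S : Matrix n n R) :
    Matrix n n R :=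
  S - S * Cᴴ * (C * S * Cᴴ + V)⁻¹ * C * S

theorem measurementUpdate_eq_schur_complement {C : Matrix m n R} {V : Matrix m m R}
    {S : Matrix n n R} (hS : S.IsHermitian) :
    measurementUpdate C V S = S - (C * S)ᴴ * (C * S * Cᴴ + V)⁻¹ * (C * S) := by
  simp only [measurementUpdate, conjTranspose_mul, hS.eq, Matrix.mul_assoc]

theorem posSemidef_measurementUpdate_sub [DecidableEq n] [PartialOrder R] [StarOrderedRing R]
    {C : Matrix m n R} {V : Matrix m m R} (hV : V.PosDef)
    {S₁ S₂ : Matrix n n R} (hS₁ : S₁.PosSemidef) (h : (S₂ - S₁).PosSemidef) :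
    (measurementUpdate C V S₂ - measurementUpdate C V S₁).PosSemidef := by
  have hS₂ : S₂.PosSemidef := by simpa using hS₁.add h
  rw [measurementUpdate_eq_schur_complement hS₁.isHermitian,
    measurementUpdate_eq_schur_complement hS₂.isHermitian]
  refine posSemidef_schur_complement_sub_of_fromBlocks₁₁ _ _ _ _
    (PosDef.posSemidef_add (hS₁.mul_mul_conjTranspose_same C) hV)
    (PosDef.posSemidef_add (hS₂.mul_mul_conjTranspose_same C) hV) ?_
  have hblocks : fromBlocks (C * S₂ * Cᴴ + V) (C * S₂) (C * S₂)ᴴ S₂ -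
      fromBlocks (C * S₁ * Cᴴ + V) (C * S₁) (C * S₁)ᴴ S₁ =
      fromRows C 1 * (S₂ - S₁) * (fromRows C 1)ᴴ := by
    rw [conjTranspose_fromRows_eq_fromCols_conjTranspose, fromRows_mul, fromRows_mul_fromCols]
    ext (_ | _) (_ | _) <;>
      simp [Matrix.mul_sub, Matrix.sub_mul, conjTranspose_mul, hS₁.isHermitian.eq,
        hS₂.isHermitian.eq]
  rw [hblocks]
  exact h.mul_mul_conjTranspose_same _

end MeasurementUpdate

theorem riccati_map_monotone_general {X Y : ℕ}
    (A : Matrix (Fin X) (Fin X) ℝ) (C : Matrix (Fin Y) (Fin X) ℝ)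
    (R : Matrix (Fin Y) (Fin Y) ℝ) (Q : Matrix (Fin X) (Fin X) ℝ)
    (hR : R.PosDef)
    (S₁ S₂ : Matrix (Fin X) (Fin X) ℝ)
    (hS₁ : S₁.PosDef)
    (h12 : (S₂ - S₁).PosSemidef) :
    (riccatiMap A C R Q S₂ - riccatiMap A C R Q S₁).PosSemidef := by
  have hdiff : riccatiMap A C R Q S₂ - riccatiMap A C R Q S₁ =
      A * (measurementUpdate C R S₂ - measurementUpdate C R S₁) * Aᴴ := by
    simp only [riccatiMap, measurementUpdate, conjTranspose_eq_transpose_of_trivial,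
      add_sub_add_right_eq_sub, Matrix.mul_sub, Matrix.sub_mul]
  rw [hdiff]
  exact (posSemidef_measurementUpdate_sub hR hS₁.posSemidef h12).mul_mul_conjTranspose_same A

/-- **Monotonicity of the Riccati/Kalman update in the prior covariance.**  For `R`
symmetric positive definite, `Q` symmetric positive semidefinite and arbitrary `A`,
`C`, the Riccati map `𝓡(S) = A (S − S Cᵀ (C S Cᵀ + R)⁻¹ C S) Aᵀ + Q` is monotone on
positive definite matrices with respect to the Loewner order: `S₁ ⪯ S₂` implies
`𝓡(S₁) ⪯ 𝓡(S₂)`. -/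
theorem riccati_map_monotone {X Y : ℕ}
    (A : Matrix (Fin X) (Fin X) ℝ) (C : Matrix (Fin Y) (Fin X) ℝ)
    (R : Matrix (Fin Y) (Fin Y) ℝ) (Q : Matrix (Fin X) (Fin X) ℝ)
    (hR : R.PosDef) (hQ : Q.PosSemidef)
    (S₁ S₂ : Matrix (Fin X) (Fin X) ℝ)
    (hS₁ : S₁.PosDef) (hS₂ : S₂.PosDef)
    (h12 : (S₂ - S₁).PosSemidef) :
    (riccatiMap A C R Q S₂ - riccatiMap A C R Q S₁).PosSemidef :=
  riccati_map_monotone_general A C R Q hR S₁ S₂ hS₁ h12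
end

section
/- (Slow learning in Gaussian social learning / cascaded Kalman filters: the k^{1/3} law.) Fix ρ > 0 (precision of each private observation of a static Gaussian state) and σ > 0 (standard deviation of the noise with which each agent's conditional-mean estimate is observed). Define the public precision recursion P_{k+1} = P_k + γ_k² / (γ_k²/ρ + σ²), where γ_k = ρ/(ρ + P_k), with arbitrary initial precision P_0 > 0. Then P_k → ∞ and lim_{k→∞} P_k / k^{1/3} = (3ρ²/σ²)^{1/3}. Consequently the public variance Σ_k = 1/P_k satisfies lim_{k→∞} k^{1/3} Σ_k = (σ²/(3ρ²))^{1/3}; in particular Σ_k = Θ(k^{-1/3}) rather than Θ(k^{-1}), and the leading-order rate k^{-1/3} is the same for every σ > 0. -/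
/-!
Each step adds the precision `D(P) = γ²/(γ²/ρ + σ²)` with `γ = ρ/(ρ + P)`. The gain is positive
and continuous, so `P` cannot converge and tends to infinity; then `γ ≈ ρ/P`, so
`P² D(P) → ρ²/σ²`. Expanding the cube, `P_{k+1}³ - P_k³ = 3 P_k² D + 3 P_k D² + D³ → 3ρ²/σ²`,
and by Cesàro `P_k³ / k → 3ρ²/σ²`; taking cube roots gives the law.
-/

open Filter Topology

theorem tendsto_atTop_of_succ_eq_add {f : ℝ → ℝ} {P : ℕ → ℝ}
    (hrec : ∀ k, P (k + 1) = P k + f (P k))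
    (hf_pos : ∀ x, P 0 ≤ x → 0 < f x) (hf_cont : ∀ x, P 0 ≤ x → ContinuousAt f x) :
    Tendsto P atTop atTop := by
  have hge : ∀ k, P 0 ≤ P k := by
    intro k
    induction k with
    | zero => rfl
    | succ k ih => linarith [hrec k, hf_pos _ ih]
  have hmono : Monotone P :=
    monotone_nat_of_le_succ fun k => by linarith [hrec k, hf_pos _ (hge k)]
  rcases tendsto_atTop_of_monotone hmono with h | ⟨L, hL⟩
  · exact h
  · have hL0 : P 0 ≤ L := ge_of_tendsto' hL hge
    have hf_zero : Tendsto (fun k => f (P k)) atTop (𝓝 0) := by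
      have h := (hL.comp (tendsto_add_atTop_nat 1)).sub hL
      rw [sub_self] at h
      exact h.congr fun k => by simp [hrec k]
    have hf_L : Tendsto (fun k => f (P k)) atTop (𝓝 (f L)) := (hf_cont L hL0).tendsto.comp hL
    exact absurd (tendsto_nhds_unique hf_L hf_zero) (hf_pos L hL0).ne'

theorem tendsto_div_natCast_of_tendsto_sub {u : ℕ → ℝ} {l : ℝ}
    (h : Tendsto (fun k => u (k + 1) - u k) atTop (𝓝 l)) :
    Tendsto (fun n : ℕ => u n / n) atTop (𝓝 l) := by
  have h := h.cesaro.add (tendsto_const_div_atTop_nhds_zero_nat (u 0))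
  rw [add_zero] at h
  refine h.congr fun n => ?_
  rw [Finset.sum_range_sub (fun i => u i) n]
  ring

theorem tendsto_succ_cube_sub_cube {P D : ℕ → ℝ} {c : ℝ}
    (hrec : ∀ k, P (k + 1) = P k + D k) (hP : Tendsto P atTop atTop)
    (hD : Tendsto (fun k => P k ^ 2 * D k) atTop (𝓝 c)) :
    Tendsto (fun k => P (k + 1) ^ 3 - P k ^ 3) atTop (𝓝 (3 * c)) := by
  have hPinv : Tendsto (fun k => (P k)⁻¹) atTop (𝓝 0) := hP.inv_tendsto_atTop
  have hPD : Tendsto (fun k => P k * D k) atTop (𝓝 0) := by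
    have h := hD.mul hPinv
    rw [mul_zero] at h
    refine h.congr' ?_
    filter_upwards [hP.eventually_ne_atTop 0] with k hk
    field_simp
  have hD0 : Tendsto D atTop (𝓝 0) := by
    have h := hPD.mul hPinv
    rw [mul_zero] at h
    refine h.congr' ?_
    filter_upwards [hP.eventually_ne_atTop 0] with k hk
    field_simp
  have h := ((hD.const_mul 3).add ((hPD.const_mul 3).mul hD0)).add (hD0.pow 3)
  rw [show 3 * c + 3 * 0 * 0 + (0 : ℝ) ^ 3 = 3 * c by ring] at h
  exact h.congr fun k => by rw [hrec k]; ring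

theorem tendsto_div_rpow_third_of_tendsto_cube_div {P : ℕ → ℝ} {a : ℝ}
    (hP : ∀ᶠ k in atTop, 0 ≤ P k) (h : Tendsto (fun n : ℕ => P n ^ 3 / n) atTop (𝓝 a)) :
    Tendsto (fun n : ℕ => P n / (n : ℝ) ^ ((1 : ℝ) / 3)) atTop (𝓝 (a ^ ((1 : ℝ) / 3))) := by
  refine (h.rpow_const (Or.inr (by norm_num))).congr' ?_
  filter_upwards [hP] with n hn
  rw [Real.div_rpow (by positivity) n.cast_nonneg, ← Real.rpow_natCast, ← Real.rpow_mul hn]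
  norm_num

noncomputable def precisionGain (ρ σ p : ℝ) : ℝ :=
  (ρ / (ρ + p)) ^ 2 / ((ρ / (ρ + p)) ^ 2 / ρ + σ ^ 2)

theorem precisionGain_pos {ρ σ p : ℝ} (hρ : 0 < ρ) (hp : 0 ≤ p) : 0 < precisionGain ρ σ p := by
  unfold precisionGain
  positivity

theorem continuousAt_precisionGain {ρ σ p : ℝ} (hρ : 0 < ρ) (hp : 0 ≤ p) :
    ContinuousAt (precisionGain ρ σ) p := by
  unfold precisionGain
  fun_prop (disch := positivity)

theorem tendsto_sq_mul_precisionGain {ρ σ : ℝ} (hσ : σ ≠ 0) :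
    Tendsto (fun p => p ^ 2 * precisionGain ρ σ p) atTop (𝓝 (ρ ^ 2 / σ ^ 2)) := by
  have hγ : Tendsto (fun p => ρ / (ρ + p)) atTop (𝓝 0) :=
    tendsto_const_nhds.div_atTop (tendsto_atTop_add_const_left _ ρ tendsto_id)
  have hpγ : Tendsto (fun p => ρ * (1 - ρ / (ρ + p))) atTop (𝓝 ρ) := by
    simpa using ((tendsto_const_nhds (x := (1 : ℝ))).sub hγ).const_mul ρ
  have h := (hpγ.pow 2).div (((hγ.pow 2).div_const ρ).add_const (σ ^ 2)) (by simpa)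
  simp only [ne_eq, OfNat.ofNat_ne_zero, not_false_eq_true, zero_pow, zero_div, zero_add] at h
  refine h.congr' ?_
  filter_upwards [eventually_gt_atTop (-ρ)] with p hp
  have hρp : ρ + p ≠ 0 := by linarith
  simp only [Pi.div_apply, precisionGain]
  field_simp
  ring

/-- **Slow learning in Gaussian social learning / cascaded Kalman filters: the
`k^{1/3}` law.**  For the public precision recursion
`P (k+1) = P k + γ_k² / (γ_k²/ρ + σ²)` with `γ_k = ρ/(ρ + P k)`, precision `ρ > 0` of
each private observation, observation-noise standard deviation `σ > 0` and any initial
precision `P 0 > 0`:  `P k → ∞`, `P k / k^{1/3} → (3ρ²/σ²)^{1/3}`, and the public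
variance `Σ_k = 1 / P k` satisfies `k^{1/3} Σ_k → (σ²/(3ρ²))^{1/3}`. -/
theorem slow_learning_cube_root_law (ρ σ : ℝ) (hρ : 0 < ρ) (hσ : 0 < σ)
    (P : ℕ → ℝ) (hP0 : 0 < P 0)
    (hrec : ∀ k, P (k+1) = P k +
      (ρ / (ρ + P k))^2 / ((ρ / (ρ + P k))^2 / ρ + σ^2)) :
    Tendsto P atTop atTop ∧
    Tendsto (fun k : ℕ => P k / (k : ℝ) ^ ((1:ℝ)/3)) atTop
      (nhds ((3 * ρ^2 / σ^2) ^ ((1:ℝ)/3))) ∧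
    Tendsto (fun k : ℕ => (k : ℝ) ^ ((1:ℝ)/3) * (1 / P k)) atTop
      (nhds ((σ^2 / (3 * ρ^2)) ^ ((1:ℝ)/3))) := by
  have hrec' : ∀ k, P (k + 1) = P k + precisionGain ρ σ (P k) := hrec
  have htop : Tendsto P atTop atTop :=
    tendsto_atTop_of_succ_eq_add hrec' (fun x hx => precisionGain_pos hρ (hP0.le.trans hx))
      (fun x hx => continuousAt_precisionGain hρ (hP0.le.trans hx))
  have hcube := tendsto_succ_cube_sub_cube hrec' htop
    ((tendsto_sq_mul_precisionGain hσ.ne').comp htop)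
  rw [← mul_div_assoc] at hcube
  have hlaw := tendsto_div_rpow_third_of_tendsto_cube_div (htop.eventually_ge_atTop 0)
    (tendsto_div_natCast_of_tendsto_sub hcube)
  refine ⟨htop, hlaw, ?_⟩
  have hlim :
      ((3 * ρ ^ 2 / σ ^ 2) ^ ((1 : ℝ) / 3))⁻¹ = (σ ^ 2 / (3 * ρ ^ 2)) ^ ((1 : ℝ) / 3) := by
    rw [← Real.inv_rpow (by positivity), inv_div]
  rw [← hlim]
  exact (hlaw.inv₀ (by positivity)).congr fun k => by rw [inv_div, div_eq_mul_one_div]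
end

section
/- (Theorem 2, sequential localization game: the asymptotic covariance is twice the classical one.) Consider scalar Bayesian localization of a static Gaussian state x₀ in which, at even times k, we take a direct observation of x₀ with Gaussian noise of unit variance (adding precision 1 to our posterior), while at odd times k we only intercept the adversary's action, yielding the effective observation z_k = x₀ + ((1−ψ_k)/ψ_k) ε_{k−1} + v_k + ε_k/ψ_k of (eq. 13), where v_k has unit variance, ε_{k−1}, ε_k are independent with variance σ_a² > 0, and ψ_k ∈ (0,1) is the adversary's Kalman gain, which satisfies k·ψ_k → c for some constant c > 0. Then our posterior precision P_k = P_0 + Σ_{j ≤ k, j even} 1 + Σ_{j ≤ k, j odd} r_j^{-1}, with r_j = ((1−ψ_j)/ψ_j)² σ_a² + 1 + σ_a²/ψ_j² the effective noise variance at odd times, satisfies P_k / k → 1/2; equivalently the covariance Σ_k = 1/P_k of our estimate of x₀ satisfies lim_{k→∞} k Σ_k = 2. Moreover this limit is independent of σ_a² as long as σ_a² > 0. -/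
/-!
The odd-time observations carry precision `r⁻¹ ≤ ψ² / σa²`, and `ψ k ~ c / k` tends to zero, so
their Cesàro average vanishes; the even-time observations contribute precision `1` at half of
all times. Hence `P k / k → 1 / 2`, and inverting gives `k Σ_k → 2`.
-/

open Filter Finset Topology

theorem Filter.Tendsto.cesaro_Icc_one {u : ℕ → ℝ} {l : ℝ} (h : Tendsto u atTop (𝓝 l)) :
    Tendsto (fun n : ℕ => (∑ i ∈ Icc 1 n, u i) / n) atTop (𝓝 l) := by
  refine (h.comp (tendsto_add_atTop_nat 1)).cesaro.congr fun n => ?_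
  rw [inv_mul_eq_div, ← Ico_add_one_right_eq_Icc, sum_Ico_eq_sum_range, Nat.add_sub_cancel]
  simp only [Function.comp_apply, add_comm]

theorem sum_Icc_one_ite_even (n : ℕ) :
    ∑ j ∈ Icc 1 n, (if Even j then (1 : ℝ) else 0) = (n / 2 : ℕ) := by
  have hIcc : Icc 1 n = Ioc 0 n := Icc_add_one_left_eq_Ioc 0 n
  rw [sum_boole, ← Nat.Ioc_filter_dvd_card_eq_div n 2, hIcc]
  simp only [even_iff_two_dvd]

theorem tendsto_natCast_div_two_div_natCast :
    Tendsto (fun n : ℕ => ((n / 2 : ℕ) : ℝ) / n) atTop (𝓝 (1 / 2)) := by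
  have hfloor := (tendsto_nat_floor_div_atTop (R := ℝ)).comp
    ((tendsto_natCast_atTop_atTop (R := ℝ)).atTop_div_const (r := 2) two_pos)
  refine (hfloor.div_const 2).congr fun n => ?_
  rw [Function.comp_apply, ← Nat.floor_div_eq_div (K := ℝ)]
  push_cast
  rcases eq_or_ne (n : ℝ) 0 with hn | hn
  · simp [hn]
  · field_simp

theorem tendsto_sum_Icc_one_ite_even_div {f : ℕ → ℝ} (hf : Tendsto f atTop (𝓝 0)) :
    Tendsto (fun n : ℕ => (∑ j ∈ Icc 1 n, if Even j then (1 : ℝ) else f j) / n)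
      atTop (𝓝 (1 / 2)) := by
  have hodd : Tendsto (fun j => if Even j then (0 : ℝ) else f j) atTop (𝓝 0) :=
    squeeze_zero_norm (fun j => by split_ifs <;> simp) (tendsto_zero_iff_norm_tendsto_zero.1 hf)
  have hsplit : ∀ j, (if Even j then (1 : ℝ) else f j) =
      (if Even j then 1 else 0) + (if Even j then 0 else f j) := fun j => by
    split_ifs <;> simp
  simp only [hsplit, sum_add_distrib, add_div, sum_Icc_one_ite_even]
  simpa using tendsto_natCast_div_two_div_natCast.add hodd.cesaro_Icc_one

theorem tendsto_zero_of_tendsto_natCast_mul {ψ : ℕ → ℝ} {c : ℝ}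
    (h : Tendsto (fun k : ℕ => (k : ℝ) * ψ k) atTop (𝓝 c)) : Tendsto ψ atTop (𝓝 0) := by
  refine (h.div_atTop tendsto_natCast_atTop_atTop).congr' ?_
  filter_upwards [eventually_ne_atTop 0] with k hk
  field_simp

/-- The variance of the noise in `z = x₀ + ((1 - ψ) / ψ) ε + v + ε' / ψ` (eq. 13), where `ψ` is the
adversary's Kalman gain and `ε, ε'` have variance `σa²`. -/
noncomputable def effectiveNoiseVariance (σa ψ : ℝ) : ℝ :=
  ((1 - ψ) / ψ) ^ 2 * σa ^ 2 + 1 + σa ^ 2 / ψ ^ 2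

theorem inv_effectiveNoiseVariance_le {σa ψ : ℝ} (hσa : σa ≠ 0) (hψ : 0 < ψ) :
    (effectiveNoiseVariance σa ψ)⁻¹ ≤ ψ ^ 2 / σa ^ 2 := by
  rw [← inv_div]
  refine inv_anti₀ (by positivity) ?_
  unfold effectiveNoiseVariance
  have : 0 ≤ ((1 - ψ) / ψ) ^ 2 * σa ^ 2 := by positivity
  linarith

theorem tendsto_inv_effectiveNoiseVariance {α : Type*} {l : Filter α} {σa : ℝ} {ψ : α → ℝ}
    (hσa : σa ≠ 0) (hpos : ∀ᶠ x in l, 0 < ψ x) (h0 : Tendsto ψ l (𝓝 0)) :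
    Tendsto (fun x => (effectiveNoiseVariance σa (ψ x))⁻¹) l (𝓝 0) := by
  have hbound : Tendsto (fun x => ψ x ^ 2 / σa ^ 2) l (𝓝 0) := by
    simpa using (h0.pow 2).div_const (σa ^ 2)
  refine squeeze_zero' ?_ ?_ hbound
  · filter_upwards [hpos] with x hx
    exact inv_nonneg.2 (by unfold effectiveNoiseVariance; positivity)
  · filter_upwards [hpos] with x hx
    exact inv_effectiveNoiseVariance_le hσa hx

theorem localization_game_twice_covariance_general (σa c P₀ : ℝ)
    (hσa : 0 < σa)
    (ψ : ℕ → ℝ) (hψ : ∀ k, ψ k ∈ Set.Ioo (0:ℝ) 1)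
    (hgain : Tendsto (fun k : ℕ => (k : ℝ) * ψ k) atTop (nhds c))
    (r : ℕ → ℝ)
    (hr : ∀ k, r k = ((1 - ψ k) / ψ k)^2 * σa^2 + 1 + σa^2 / (ψ k)^2)
    (P : ℕ → ℝ)
    (hP : ∀ k, P k = P₀ + ∑ j ∈ Finset.Icc 1 k,
      (if Even j then (1:ℝ) else (r j)⁻¹)) :
    Tendsto (fun k : ℕ => P k / (k : ℝ)) atTop (nhds (1/2)) ∧
    Tendsto (fun k : ℕ => (k : ℝ) * (1 / P k)) atTop (nhds 2) := by
  have hr : r = fun k => effectiveNoiseVariance σa (ψ k) := funext hr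
  have hodd : Tendsto (fun k => (r k)⁻¹) atTop (𝓝 0) := by
    rw [hr]
    exact tendsto_inv_effectiveNoiseVariance hσa.ne' (.of_forall fun k => (hψ k).1)
      (tendsto_zero_of_tendsto_natCast_mul hgain)
  have hprecision : Tendsto (fun k : ℕ => P k / k) atTop (𝓝 (1 / 2)) := by
    have hP₀ : Tendsto (fun k : ℕ => P₀ / k) atTop (𝓝 0) :=
      tendsto_const_nhds.div_atTop tendsto_natCast_atTop_atTop
    simpa [hP, add_div] using hP₀.add (tendsto_sum_Icc_one_ite_even_div hodd)
  refine ⟨hprecision, ?_⟩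
  simpa [div_eq_mul_inv] using hprecision.inv₀ (by norm_num)

/-- **Theorem 2 (sequential localization game): the asymptotic covariance is twice the
classical one.**  At even times we take a direct unit-variance observation of the
static state (adding precision 1); at odd times we only intercept the adversary's
action, whose effective observation noise variance is
`r j = ((1−ψ j)/ψ j)² σa² + 1 + σa²/ψ j²`, where `ψ j ∈ (0,1)` is the adversary's
Kalman gain with `j·ψ j → c > 0` and `σa² > 0` is the action-observation noise
variance.  Then the posterior precision
`P k = P 0 + Σ_{1 ≤ j ≤ k, j even} 1 + Σ_{1 ≤ j ≤ k, j odd} (r j)⁻¹`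
satisfies `P k / k → 1/2`; equivalently the covariance `Σ_k = 1 / P k` satisfies
`k Σ_k → 2`, independently of `σa² > 0`. -/
theorem localization_game_twice_covariance (σa c P₀ : ℝ)
    (hσa : 0 < σa) (hc : 0 < c) (hP₀ : 0 < P₀)
    (ψ : ℕ → ℝ) (hψ : ∀ k, ψ k ∈ Set.Ioo (0:ℝ) 1)
    (hgain : Tendsto (fun k : ℕ => (k : ℝ) * ψ k) atTop (nhds c))
    (r : ℕ → ℝ)
    (hr : ∀ k, r k = ((1 - ψ k) / ψ k)^2 * σa^2 + 1 + σa^2 / (ψ k)^2)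
    (P : ℕ → ℝ)
    (hP : ∀ k, P k = P₀ + ∑ j ∈ Finset.Icc 1 k,
      (if Even j then (1:ℝ) else (r j)⁻¹)) :
    Tendsto (fun k : ℕ => P k / (k : ℝ)) atTop (nhds (1/2)) ∧
    Tendsto (fun k : ℕ => (k : ℝ) * (1 / P k)) atTop (nhds 2) :=
  localization_game_twice_covariance_general σa c P₀ hσa ψ hψ hgain r hr P hP
end

section
/- (Optimal inverse filter recursion, eq. (4), finite-space version.) Let 𝒳, 𝒴, 𝒜 be finite sets and Π a finite set of probability mass functions on 𝒳. Let P(x, x') be a transition kernel on 𝒳 with initial distribution π₀ ∈ Π, B(x, y) an observation kernel from 𝒳 to 𝒴, G(π, a) an action kernel from Π to 𝒜, and T : Π × 𝒴 → Π a map with T(Π × 𝒴) ⊆ Π (the adversary's filter update). Define the joint probability of a trajectory (x_{0:N}, y_{1:N}, a_{1:N}) as π₀(x₀) ∏_{k=1}^{N} P(x_{k−1}, x_k) B(x_k, y_k) G(π_k, a_k), where π_k = T(π_{k−1}, y_k). Then for every k < N, every trajectory (x_{0:k+1}, a_{1:k+1}) of positive probability, and every π ∈ Π, the conditional probability α_{k+1}(π)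 = ℙ(π_{k+1} = π | a_{1:k+1}, x_{0:k+1}) satisfies the recursion α_{k+1}(π) = [ G(π, a_{k+1}) · Σ_{π' ∈ Π} Σ_{y ∈ 𝒴 : T(π', y) = π} B(x_{k+1}, y) α_k(π') ] / [ Σ_{π̄ ∈ Π} G(π̄, a_{k+1}) · Σ_{π' ∈ Π} Σ_{y ∈ 𝒴 : T(π', y) = π̄} B(x_{k+1}, y) α_k(π') ]. -/
open Finset

noncomputable section

/-- The adversary's belief after `k` observations `y : Fin k → Y`, obtained by
iterating the deterministic filter map `T` from the initial belief `π₀`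
(`y i` is the observation `y_{i+1}`). -/
def belAt {Y Bel : Type*} (T : Bel → Y → Bel) (π₀ : Bel) :
    (k : ℕ) → (Fin k → Y) → Bel
  | 0, _ => π₀
  | (k+1), y => T (belAt T π₀ k (fun i => y i.castSucc)) (y (Fin.last k))

/-- Joint probability of a trajectory `(x_{0:k}, y_{1:k}, a_{1:k})`:
`π₀(x₀) ∏_{j=1}^{k} P(x_{j−1},x_j) B(x_j,y_j) G(π_j,a_j)` with
`π_j = T(π_{j−1}, y_j)`.  Here `val b` is the pmf on `X` represented by the
belief `b`, and `y i` encodes `y_{i+1}`. -/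
def jointP {X Y A Bel : Type*} [Fintype Y]
    (val : Bel → X → ℝ) (Pk : X → X → ℝ) (Bk : X → Y → ℝ) (G : Bel → A → ℝ)
    (T : Bel → Y → Bel) (π₀ : Bel)
    (k : ℕ) (x : ℕ → X) (y : Fin k → Y) (a : ℕ → A) : ℝ :=
  val π₀ (x 0) * ∏ i : Fin k,
    (Pk (x i.val) (x (i.val + 1)) * Bk (x (i.val + 1)) (y i) *
      G (belAt T π₀ (i.val + 1) (fun j => y (Fin.castLE i.isLt j))) (a (i.val + 1)))

/-- Probability of observing `(x_{0:k}, a_{1:k})`: the `y`-marginal of `jointP`. -/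
def probXA {X Y A Bel : Type*} [Fintype Y]
    (val : Bel → X → ℝ) (Pk : X → X → ℝ) (Bk : X → Y → ℝ) (G : Bel → A → ℝ)
    (T : Bel → Y → Bel) (π₀ : Bel) (k : ℕ) (x : ℕ → X) (a : ℕ → A) : ℝ :=
  ∑ y : Fin k → Y, jointP val Pk Bk G T π₀ k x y a

/-- Probability of `(x_{0:k}, a_{1:k})` jointly with the event `π_k = π`. -/
def probXABel {X Y A Bel : Type*} [Fintype Y] [DecidableEq Bel]
    (val : Bel → X → ℝ) (Pk : X → X → ℝ) (Bk : X → Y → ℝ) (G : Bel → A → ℝ)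
    (T : Bel → Y → Bel) (π₀ : Bel) (k : ℕ) (x : ℕ → X) (a : ℕ → A) (π : Bel) : ℝ :=
  ∑ y : Fin k → Y,
    if belAt T π₀ k y = π then jointP val Pk Bk G T π₀ k x y a else 0

/-!
Appending a step `(x_{k+1}, y_{k+1}, a_{k+1})` multiplies the joint probability of a trajectory by
`P(x_k, x_{k+1}) B(x_{k+1}, y_{k+1}) G(π_{k+1}, a_{k+1})`, and `π_{k+1} = T(π_k, y_{k+1})` depends
on `y_{1:k}` only through `π_k`. Grouping the sum over `y_{1:k+1}` by `π_k` therefore writes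
`ℙ(π_{k+1} = π, x_{0:k+1}, a_{1:k+1})` as `P(x_k, x_{k+1})` times the unnormalized update (4)
applied to `ℙ(π_k = ·, x_{0:k}, a_{1:k})`. On normalizing, `P(x_k, x_{k+1})` cancels and, the
update being linear, so does `ℙ(x_{0:k}, a_{1:k})`; by nonnegativity of the kernels the latter
vanishes only if `ℙ(x_{0:k+1}, a_{1:k+1})` does.
-/

section InverseFilter

variable {X Y A Bel : Type*}

theorem Fintype.sum_pi_fin_succ {M : Type*} [Fintype Y] [AddCommMonoid M] (k : ℕ)
    (f : (Fin (k + 1) → Y) → M) :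
    ∑ y, f y = ∑ y : Fin k → Y, ∑ y', f (Fin.snoc y y') := by
  rw [← (Fin.snocEquiv fun _ => Y).sum_comp, Fintype.sum_prod_type, sum_comm]
  rfl

theorem belAt_snoc (T : Bel → Y → Bel) (π₀ : Bel) (k : ℕ) (y : Fin k → Y) (y' : Y) :
    belAt T π₀ (k + 1) (Fin.snoc y y') = T (belAt T π₀ k y) y' := by
  simp [belAt]

variable [Fintype Y] [Fintype Bel] [DecidableEq Bel]

/-- The probability that the adversary's belief moves from `π'` to `π` when the state is `x`. -/
def beliefTransition (Bk : X → Y → ℝ) (T : Bel → Y → Bel) (x : X) (π' π : Bel) : ℝ :=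
  ∑ y, if T π' y = π then Bk x y else 0

/-- The numerator of eq. (4). -/
def unnormalizedInverseFilter (Bk : X → Y → ℝ) (G : Bel → A → ℝ) (T : Bel → Y → Bel)
    (x : X) (a : A) (α : Bel → ℝ) (π : Bel) : ℝ :=
  G π a * ∑ π', beliefTransition Bk T x π' π * α π'

theorem unnormalizedInverseFilter_div (Bk : X → Y → ℝ) (G : Bel → A → ℝ) (T : Bel → Y → Bel)
    (x : X) (a : A) (α : Bel → ℝ) (c : ℝ) (π : Bel) :
    unnormalizedInverseFilter Bk G T x a (fun π' => α π' / c) π =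
      unnormalizedInverseFilter Bk G T x a α π / c := by
  simp only [unnormalizedInverseFilter, mul_div_assoc, sum_div]

variable (val : Bel → X → ℝ) (Pk : X → X → ℝ) (Bk : X → Y → ℝ) (G : Bel → A → ℝ)
  (T : Bel → Y → Bel) (π₀ : Bel)

omit [Fintype Bel] [DecidableEq Bel] in
theorem jointP_snoc (k : ℕ) (x : ℕ → X) (y : Fin k → Y) (y' : Y) (a : ℕ → A) :
    jointP val Pk Bk G T π₀ (k + 1) x (Fin.snoc y y') a =
      jointP val Pk Bk G T π₀ k x y a *
        (Pk (x k) (x (k + 1)) * Bk (x (k + 1)) y' * G (T (belAt T π₀ k y) y') (a (k + 1))) := by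
  have hprefix (i : Fin k) (j : Fin (i + 1)) :
      (Fin.snoc y y' : Fin (k + 1) → Y) (Fin.castLE i.castSucc.isLt j) = y (Fin.castLE i.isLt j) :=
    Fin.snoc_castSucc (α := fun _ => Y) y' y (Fin.castLE i.isLt j)
  simp only [jointP, Fin.prod_univ_castSucc, Fin.val_castSucc, Fin.snoc_castSucc, hprefix,
    Fin.val_last, Fin.snoc_last, Fin.castLE_refl, ← belAt_snoc, mul_assoc]

omit [Fintype Bel] [DecidableEq Bel] in
theorem jointP_nonneg (hval : ∀ b x, 0 ≤ val b x) (hPk : ∀ x x', 0 ≤ Pk x x')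
    (hBk : ∀ x y, 0 ≤ Bk x y) (hG : ∀ b a, 0 ≤ G b a)
    (k : ℕ) (x : ℕ → X) (y : Fin k → Y) (a : ℕ → A) :
    0 ≤ jointP val Pk Bk G T π₀ k x y a :=
  mul_nonneg (hval _ _) <| prod_nonneg fun _ _ =>
    mul_nonneg (mul_nonneg (hPk _ _) (hBk _ _)) (hG _ _)

omit [Fintype Bel] [DecidableEq Bel] in
theorem probXA_succ_eq_zero (hval : ∀ b x, 0 ≤ val b x) (hPk : ∀ x x', 0 ≤ Pk x x')
    (hBk : ∀ x y, 0 ≤ Bk x y) (hG : ∀ b a, 0 ≤ G b a)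
    (k : ℕ) (x : ℕ → X) (a : ℕ → A) (h : probXA val Pk Bk G T π₀ k x a = 0) :
    probXA val Pk Bk G T π₀ (k + 1) x a = 0 := by
  have hzero (y : Fin k → Y) : jointP val Pk Bk G T π₀ k x y a = 0 :=
    (sum_eq_zero_iff_of_nonneg fun y _ => jointP_nonneg val Pk Bk G T π₀ hval hPk hBk hG k x y a).mp
      h y (mem_univ y)
  simp [probXA, Fintype.sum_pi_fin_succ, jointP_snoc, hzero]

theorem sum_mul_probXABel (f : Bel → ℝ) (k : ℕ) (x : ℕ → X) (a : ℕ → A) :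
    ∑ π, f π * probXABel val Pk Bk G T π₀ k x a π =
      ∑ y, f (belAt T π₀ k y) * jointP val Pk Bk G T π₀ k x y a := by
  simp only [probXABel, mul_sum, mul_ite, mul_zero]
  rw [sum_comm]
  simp

theorem probXA_eq_sum_probXABel (k : ℕ) (x : ℕ → X) (a : ℕ → A) :
    probXA val Pk Bk G T π₀ k x a = ∑ π, probXABel val Pk Bk G T π₀ k x a π := by
  simpa [probXA] using (sum_mul_probXABel val Pk Bk G T π₀ (fun _ => 1) k x a).symm

theorem probXABel_succ (k : ℕ) (x : ℕ → X) (a : ℕ → A) (π : Bel) :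
    probXABel val Pk Bk G T π₀ (k + 1) x a π =
      Pk (x k) (x (k + 1)) * unnormalizedInverseFilter Bk G T (x (k + 1)) (a (k + 1))
        (probXABel val Pk Bk G T π₀ k x a) π := by
  rw [unnormalizedInverseFilter, sum_mul_probXABel, probXABel, Fintype.sum_pi_fin_succ, mul_sum,
    mul_sum]
  refine sum_congr rfl fun y _ => ?_
  simp only [belAt_snoc, jointP_snoc, beliefTransition, sum_mul, mul_sum]
  refine sum_congr rfl fun y' _ => ?_
  split_ifs with h
  · subst h; ring
  · simp

theorem probXA_succ (k : ℕ) (x : ℕ → X) (a : ℕ → A) :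
    probXA val Pk Bk G T π₀ (k + 1) x a =
      Pk (x k) (x (k + 1)) * ∑ π, unnormalizedInverseFilter Bk G T (x (k + 1)) (a (k + 1))
        (probXABel val Pk Bk G T π₀ k x a) π := by
  simp only [probXA_eq_sum_probXABel, probXABel_succ, mul_sum]

end InverseFilter

theorem optimal_inverse_filter_recursion_general
    {X Y A Bel : Type*} [Fintype Y] [Fintype Bel]
    [DecidableEq Bel]
    (val : Bel → X → ℝ) (Pk : X → X → ℝ) (Bk : X → Y → ℝ) (G : Bel → A → ℝ)
    (T : Bel → Y → Bel) (π₀ : Bel)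
    (hval : ∀ b x, 0 ≤ val b x)
    (hPk : ∀ x x', 0 ≤ Pk x x')
    (hBk : ∀ x y, 0 ≤ Bk x y)
    (hG : ∀ b a, 0 ≤ G b a)
    (k : ℕ) (x : ℕ → X) (a : ℕ → A)
    (hpos : 0 < probXA val Pk Bk G T π₀ (k+1) x a) :
    ∀ π : Bel,
      probXABel val Pk Bk G T π₀ (k+1) x a π / probXA val Pk Bk G T π₀ (k+1) x a =
      (G π (a (k+1)) * ∑ π' : Bel,
          (∑ y : Y, if T π' y = π then Bk (x (k+1)) y else 0) *
            (probXABel val Pk Bk G T π₀ k x a π' / probXA val Pk Bk G T π₀ k x a)) /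
        (∑ πbar : Bel, G πbar (a (k+1)) * ∑ π' : Bel,
          (∑ y : Y, if T π' y = πbar then Bk (x (k+1)) y else 0) *
            (probXABel val Pk Bk G T π₀ k x a π' / probXA val Pk Bk G T π₀ k x a)) := by
  intro π
  set β := probXABel val Pk Bk G T π₀ k x a
  set S := probXA val Pk Bk G T π₀ k x a
  set update := unnormalizedInverseFilter Bk G T (x (k + 1)) (a (k + 1))
  have hmass := probXA_succ val Pk Bk G T π₀ k x a
  obtain ⟨hPk_ne, hmass_ne⟩ := mul_ne_zero_iff.mp (hmass ▸ hpos.ne')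
  have hS : S ≠ 0 := mt (probXA_succ_eq_zero val Pk Bk G T π₀ hval hPk hBk hG k x a) hpos.ne'
  change _ = update (fun π' => β π' / S) π / ∑ πbar, update (fun π' => β π' / S) πbar
  simp only [update, unnormalizedInverseFilter_div, ← sum_div, div_div_div_cancel_right₀ hS]
  rw [probXABel_succ, hmass, mul_div_mul_left _ _ hPk_ne]

/-- **Optimal inverse filter recursion (eq. (4), finite-space version).**  For finite
`𝒳, 𝒴, 𝒜` and a finite set `Π` of beliefs (pmfs on `𝒳`, via `val`), with transition
kernel `Pk`, observation kernel `Bk`, action kernel `G` and filter map `T`, the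
conditional probability `α_{k+1}(π) = ℙ(π_{k+1} = π ∣ a_{1:k+1}, x_{0:k+1})` of the
adversary's belief, given any trajectory `(x_{0:k+1}, a_{1:k+1})` of positive
probability with `k < N`, satisfies
`α_{k+1}(π) = G(π,a_{k+1}) Σ_{π'} Σ_{y : T(π',y) = π} B(x_{k+1},y) α_k(π') /
  Σ_{π̄} G(π̄,a_{k+1}) Σ_{π'} Σ_{y : T(π',y) = π̄} B(x_{k+1},y) α_k(π')`. -/
theorem optimal_inverse_filter_recursion
    {X Y A Bel : Type*} [Fintype X] [Fintype Y] [Fintype A] [Fintype Bel]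
    [DecidableEq Bel]
    (val : Bel → X → ℝ) (Pk : X → X → ℝ) (Bk : X → Y → ℝ) (G : Bel → A → ℝ)
    (T : Bel → Y → Bel) (π₀ : Bel)
    (hval : ∀ b x, 0 ≤ val b x) (hval1 : ∀ b, ∑ x, val b x = 1)
    (hPk : ∀ x x', 0 ≤ Pk x x') (hPk1 : ∀ x, ∑ x', Pk x x' = 1)
    (hBk : ∀ x y, 0 ≤ Bk x y) (hBk1 : ∀ x, ∑ y, Bk x y = 1)
    (hG : ∀ b a, 0 ≤ G b a) (hG1 : ∀ b, ∑ a, G b a = 1)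
    (N k : ℕ) (hk : k < N) (x : ℕ → X) (a : ℕ → A)
    (hpos : 0 < probXA val Pk Bk G T π₀ (k+1) x a) :
    ∀ π : Bel,
      probXABel val Pk Bk G T π₀ (k+1) x a π / probXA val Pk Bk G T π₀ (k+1) x a =
      (G π (a (k+1)) * ∑ π' : Bel,
          (∑ y : Y, if T π' y = π then Bk (x (k+1)) y else 0) *
            (probXABel val Pk Bk G T π₀ k x a π' / probXA val Pk Bk G T π₀ k x a)) /
        (∑ πbar : Bel, G πbar (a (k+1)) * ∑ π' : Bel,
          (∑ y : Y, if T π' y = πbar then Bk (x (k+1)) y else 0) *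
            (probXABel val Pk Bk G T π₀ k x a π' / probXA val Pk Bk G T π₀ k x a)) :=
  optimal_inverse_filter_recursion_general val Pk Bk G T π₀ hval hPk hBk hG k x a hpos

end
end
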